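/- arXiv:1202.5020 — 4 statements merged into one kernel-verified Lean document; each statement's English description precedes it below -/
import Mathlib

section
/- Fix real numbers n ≥ 5 and 4 < t_0 < 5. Then there is a constant A(t_0) > 0 (depending only on t_0) such that for all t ∈ [t_0, n) and all k ∈ ℕ, 0 < S_{2k}(√t)/S_{2k}(√n) ≤ A(t_0)·(t/n)^k. -/
/-!
Write `√t = l + l⁻¹` and `√n = m + m⁻¹` with `1 < l ≤ m`. The recurrence gives
`S_k(l + l⁻¹) = (l^(k+1) - l^-(k+1)) / (l - l⁻¹)`, which is squeezed between `l^k` and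
`l²/(l²-1) · l^k`. Hence `S_{2k}(√t)/S_{2k}(√n) ≤ l²/(l²-1) · (l/m)^(2k)`. Finally
`l²/(l²-1) ≤ (t₀-2)/(t₀-4)` because `t₀ ≤ t ≤ 2l² + 2`, and `l/m ≤ √t/√n` because
`l/(l + l⁻¹) = l²/(l²+1)` increases with `l`.
-/

theorem chebyshev_rec_mul_sub_inv (S : ℕ → ℝ → ℝ)
    (hS0 : ∀ x, S 0 x = 1) (hS1 : ∀ x, S 1 x = x)
    (hSrec : ∀ k, 1 ≤ k → ∀ x, x * S k x = S (k + 1) x + S (k - 1) x)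
    {l : ℝ} (hl : l ≠ 0) (k : ℕ) :
    S k (l + l⁻¹) * (l - l⁻¹) = l ^ (k + 1) - l⁻¹ ^ (k + 1) := by
  have hll : l * l⁻¹ = 1 := mul_inv_cancel₀ hl
  induction k using Nat.twoStepInduction with
  | zero => rw [hS0]; ring
  | one => rw [hS1]; ring
  | more k ih₀ ih₁ =>
    have hrec := hSrec (k + 1) (by omega) (l + l⁻¹)
    rw [Nat.add_sub_cancel] at hrec
    linear_combination
      (l + l⁻¹) * ih₁ - ih₀ - hrec * (l - l⁻¹) + (l ^ (k + 1) - l⁻¹ ^ (k + 1)) * hll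

section ClosedFormBounds

variable {s l : ℝ} {k : ℕ}

theorem pow_le_of_mul_sub_inv_eq (hl : 1 < l)
    (h : s * (l - l⁻¹) = l ^ (k + 1) - l⁻¹ ^ (k + 1)) : l ^ k ≤ s := by
  have hinv : l⁻¹ < l := (inv_lt_one_of_one_lt₀ hl).trans hl
  have hinv_pow : l⁻¹ ^ k ≤ l ^ k := pow_le_pow_left₀ (by positivity) hinv.le k
  refine le_of_mul_le_mul_right ?_ (sub_pos.mpr hinv)
  rw [h, pow_succ, pow_succ]
  nlinarith [inv_pos.mpr (zero_lt_one.trans hl)]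

theorem le_mul_pow_of_mul_sub_inv_eq (hl : 1 < l)
    (h : s * (l - l⁻¹) = l ^ (k + 1) - l⁻¹ ^ (k + 1)) : s ≤ l ^ 2 / (l ^ 2 - 1) * l ^ k := by
  have hl0 : 0 < l := zero_lt_one.trans hl
  have hsub : l - l⁻¹ = (l ^ 2 - 1) / l := by field_simp
  have hsq : 0 < l ^ 2 - 1 := by nlinarith
  have hs : s = (l ^ (k + 1) - l⁻¹ ^ (k + 1)) * l / (l ^ 2 - 1) := by
    rw [← h, hsub]; field_simp
  rw [hs, div_mul_eq_mul_div, div_le_div_iff_of_pos_right hsq, pow_succ]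
  nlinarith [pow_pos (inv_pos.mpr hl0) (k + 1), pow_pos hl0 k]

end ClosedFormBounds

theorem exists_one_lt_add_inv_eq {x : ℝ} (hx : 2 < x) : ∃ l : ℝ, 1 < l ∧ l + l⁻¹ = x := by
  have hd : 0 ≤ x ^ 2 - 4 := by nlinarith
  have hroot := Real.sq_sqrt hd
  have hroot_nonneg := Real.sqrt_nonneg (x ^ 2 - 4)
  refine ⟨(x + √(x ^ 2 - 4)) / 2, by linarith, ?_⟩
  have hinv : ((x + √(x ^ 2 - 4)) / 2)⁻¹ = (x - √(x ^ 2 - 4)) / 2 :=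
    inv_eq_of_mul_eq_one_right (by linear_combination -hroot / 4)
  rw [hinv]; ring

theorem le_of_add_inv_le_add_inv {l m : ℝ} (hm : 1 ≤ m) (h : l + l⁻¹ ≤ m + m⁻¹) : l ≤ m := by
  by_contra! hml
  have hm0 : 0 < m := zero_lt_one.trans_le hm
  have hl0 : 0 < l := hm0.trans hml
  have hlm : 1 < l * m := by nlinarith
  have hdiff : l + l⁻¹ - (m + m⁻¹) = (l - m) * (l * m - 1) / (l * m) := by
    field_simp
    ring
  have : 0 < (l - m) * (l * m - 1) / (l * m) :=
    div_pos (mul_pos (by linarith) (by linarith)) (by linarith)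
  linarith

theorem div_le_add_inv_div_add_inv {l m : ℝ} (hl : 0 < l) (hlm : l ≤ m) :
    l / m ≤ (l + l⁻¹) / (m + m⁻¹) := by
  have hm : 0 < m := hl.trans_le hlm
  rw [div_le_div_iff₀ hm (by positivity)]
  have : l * m⁻¹ ≤ m * l⁻¹ := by
    rw [← div_eq_mul_inv, ← div_eq_mul_inv, div_le_div_iff₀ hm hl]
    nlinarith
  linarith [mul_add l m m⁻¹, mul_add m l l⁻¹, mul_comm l m]

theorem sq_div_sq_sub_one_le {l c : ℝ} (hl : 1 < l) (hc : 4 < c) (h : c ≤ (l + l⁻¹) ^ 2) :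
    l ^ 2 / (l ^ 2 - 1) ≤ (c - 2) / (c - 4) := by
  have hl0 : 0 < l := zero_lt_one.trans hl
  have hinv : l⁻¹ ^ 2 ≤ l ^ 2 :=
    pow_le_pow_left₀ (by positivity) ((inv_lt_one_of_one_lt₀ hl).trans hl).le 2
  have hc_le : c ≤ 2 * l ^ 2 + 2 := by
    have : (l + l⁻¹) ^ 2 = l ^ 2 + 2 + l⁻¹ ^ 2 := by field_simp; ring
    linarith
  rw [div_le_div_iff₀ (by nlinarith) (by linarith)]
  nlinarith

theorem chebyshev_rec_ratio_le (S : ℕ → ℝ → ℝ)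
    (hS0 : ∀ x, S 0 x = 1) (hS1 : ∀ x, S 1 x = x)
    (hSrec : ∀ k, 1 ≤ k → ∀ x, x * S k x = S (k + 1) x + S (k - 1) x)
    {l m : ℝ} (hl : 1 < l) (hlm : l ≤ m) (k : ℕ) :
    0 < S k (l + l⁻¹) / S k (m + m⁻¹) ∧
      S k (l + l⁻¹) / S k (m + m⁻¹) ≤ l ^ 2 / (l ^ 2 - 1) * (l / m) ^ k := by
  have hl0 : 0 < l := zero_lt_one.trans hl
  have hm0 : 0 < m := hl0.trans_le hlm
  have hl_closed := chebyshev_rec_mul_sub_inv S hS0 hS1 hSrec hl0.ne' k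
  have hm_closed := chebyshev_rec_mul_sub_inv S hS0 hS1 hSrec hm0.ne' k
  have hm_lower := pow_le_of_mul_sub_inv_eq (hl.trans_le hlm) hm_closed
  have hl_pos : 0 < S k (l + l⁻¹) :=
    (pow_pos hl0 k).trans_le (pow_le_of_mul_sub_inv_eq hl hl_closed)
  have hm_pos : 0 < S k (m + m⁻¹) := (pow_pos hm0 k).trans_le hm_lower
  have hl_upper := le_mul_pow_of_mul_sub_inv_eq hl hl_closed
  refine ⟨div_pos hl_pos hm_pos, ?_⟩
  calc S k (l + l⁻¹) / S k (m + m⁻¹)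
      ≤ l ^ 2 / (l ^ 2 - 1) * l ^ k / m ^ k :=
        div_le_div₀ (hl_pos.le.trans hl_upper) hl_upper (pow_pos hm0 k) hm_lower
    _ = l ^ 2 / (l ^ 2 - 1) * (l / m) ^ k := by rw [div_pow, mul_div_assoc]

theorem stmt3_general (S : ℕ → ℝ → ℝ)
    (hS0 : ∀ x, S 0 x = 1) (hS1 : ∀ x, S 1 x = x)
    (hSrec : ∀ k, 1 ≤ k → ∀ x, x * S k x = S (k + 1) x + S (k - 1) x)
    (n t₀ : ℝ) (ht₀ : 4 < t₀) :
    ∃ A : ℝ, 0 < A ∧ ∀ t : ℝ, t₀ ≤ t → t < n → ∀ k : ℕ,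
      0 < S (2 * k) (Real.sqrt t) / S (2 * k) (Real.sqrt n) ∧
      S (2 * k) (Real.sqrt t) / S (2 * k) (Real.sqrt n) ≤ A * (t / n) ^ k := by
  have hA : 0 < (t₀ - 2) / (t₀ - 4) := div_pos (by linarith) (by linarith)
  refine ⟨(t₀ - 2) / (t₀ - 4), hA, fun t ht₀t htn k => ?_⟩
  have ht : 4 < t := ht₀.trans_le ht₀t
  have two_lt_sqrt {u : ℝ} (hu : 4 < u) : 2 < √u := (Real.lt_sqrt zero_le_two).mpr (by linarith)
  obtain ⟨l, hl, hlt⟩ := exists_one_lt_add_inv_eq (two_lt_sqrt ht)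
  obtain ⟨m, hm, hmn⟩ := exists_one_lt_add_inv_eq (two_lt_sqrt (ht.trans htn))
  have hl0 : 0 < l := zero_lt_one.trans hl
  have hlm : l ≤ m :=
    le_of_add_inv_le_add_inv hm.le (by rw [hlt, hmn]; exact Real.sqrt_le_sqrt htn.le)
  have hconst : l ^ 2 / (l ^ 2 - 1) ≤ (t₀ - 2) / (t₀ - 4) :=
    sq_div_sq_sub_one_le hl ht₀ (by rw [hlt, Real.sq_sqrt (by linarith)]; exact ht₀t)
  have hpow : (l / m) ^ (2 * k) ≤ (t / n) ^ k := by
    calc (l / m) ^ (2 * k) ≤ (√t / √n) ^ (2 * k) := by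
          rw [← hlt, ← hmn]
          exact pow_le_pow_left₀ (div_pos hl0 (hl0.trans_le hlm)).le
            (div_le_add_inv_div_add_inv hl0 hlm) _
      _ = (t / n) ^ k := by
          rw [pow_mul, div_pow, Real.sq_sqrt (by linarith), Real.sq_sqrt (by linarith)]
  obtain ⟨hpos, hle⟩ := chebyshev_rec_ratio_le S hS0 hS1 hSrec hl hlm (2 * k)
  rw [hlt, hmn] at hpos hle
  refine ⟨hpos, hle.trans ?_⟩
  exact mul_le_mul hconst hpow (by positivity) hA.le

/-- Fix `n ≥ 5` and `4 < t₀ < 5`.  Then there is a constant `A(t₀) > 0` depending only on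
`t₀` such that for all `t ∈ [t₀, n)` and all `k ∈ ℕ`,
`0 < S_{2k}(√t)/S_{2k}(√n) ≤ A(t₀)·(t/n)^k`. -/
theorem stmt3 (S : ℕ → ℝ → ℝ)
    (hS0 : ∀ x, S 0 x = 1) (hS1 : ∀ x, S 1 x = x)
    (hSrec : ∀ k, 1 ≤ k → ∀ x, x * S k x = S (k + 1) x + S (k - 1) x)
    (n t₀ : ℝ) (hn : 5 ≤ n) (ht₀ : 4 < t₀) (ht₀' : t₀ < 5) :
    ∃ A : ℝ, 0 < A ∧ ∀ t : ℝ, t₀ ≤ t → t < n → ∀ k : ℕ,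
      0 < S (2 * k) (Real.sqrt t) / S (2 * k) (Real.sqrt n) ∧
      S (2 * k) (Real.sqrt t) / S (2 * k) (Real.sqrt n) ≤ A * (t / n) ^ k :=
  stmt3_general S hS0 hS1 hSrec n t₀ ht₀
end

section
/- Let 0 < q < 1. There exist constants 0 < D' ≤ D'' (depending only on q) such that for all n, k ∈ ℕ and all 0 ≤ r ≤ 2·min{n,k}, setting l = n + k - r, one has D' ≤ [r+1]_q² · [2l+1]_q / ([2n+1]_q · [2k+1]_q) ≤ D''. -/
/-- The `q`-number `[a]_q = (qᵃ - q⁻ᵃ)/(q - q⁻¹)`. -/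
noncomputable def qnum (q : ℝ) (a : ℕ) : ℝ := (q ^ a - q⁻¹ ^ a) / (q - q⁻¹)

/-!
Writing `[a]_q = q^{1-a} (1 - q^{2a}) / (1 - q²)`, the powers `q^{1-a}` cancel in the ratio
because `(r + 1) + (r + 1) + (2l + 1) - 3 = (2n + 1) + (2k + 1) - 2` when `r + l = n + k`.
What is left is `(1 - q^{2r+2})² (1 - q^{4l+2}) / ((1 - q²)(1 - q^{4n+2})(1 - q^{4k+2}))`,
and for `0 < q < 1` every factor `1 - q^e` with `e ≥ 2` lies in `[1 - q², 1]`.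
-/

lemma qnum_eq_div {q : ℝ} (hq : q ≠ 0) (hq2 : q ^ 2 ≠ 1) (a : ℕ) :
    qnum q a = q * (1 - q ^ (2 * a)) / (q ^ a * (1 - q ^ 2)) := by
  have hsub : q - q⁻¹ ≠ 0 := by
    rw [sub_ne_zero]
    intro h
    apply hq2
    field_simp at h
    linear_combination h
  have hinv : q ^ a * q⁻¹ ^ a = 1 := by rw [← mul_pow, mul_inv_cancel₀ hq, one_pow]
  unfold qnum
  rw [div_eq_div_iff hsub (mul_ne_zero (pow_ne_zero a hq) (sub_ne_zero.mpr (Ne.symm hq2)))]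
  field_simp
  linear_combination (q ^ 2 - 1) * hinv

lemma qnum_ratio_eq {q : ℝ} (hq : q ≠ 0) (hq2 : q ^ 2 ≠ 1) {n k r l : ℕ} (hrl : r + l = n + k) :
    qnum q (r + 1) ^ 2 * qnum q (2 * l + 1) / (qnum q (2 * n + 1) * qnum q (2 * k + 1)) =
      (1 - q ^ (2 * (r + 1))) ^ 2 * (1 - q ^ (2 * (2 * l + 1))) /
        ((1 - q ^ 2) * (1 - q ^ (2 * (2 * n + 1))) * (1 - q ^ (2 * (2 * k + 1)))) := by
  have hpow : q * q ^ (2 * n + 1) * q ^ (2 * k + 1) = (q ^ (r + 1)) ^ 2 * q ^ (2 * l + 1) := by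
    rw [← pow_succ']
    simp only [← pow_mul, ← pow_add]
    congr 1
    omega
  simp only [qnum_eq_div hq hq2]
  field_simp
  congr 1
  linear_combination (1 - q ^ (2 * (r + 1))) ^ 2 * (1 - q ^ (2 * (2 * l + 1))) * hpow

lemma one_sub_pow_mem_Icc {q : ℝ} (hq : 0 ≤ q) (hq1 : q ≤ 1) {e : ℕ} (he : 2 ≤ e) :
    1 - q ^ e ∈ Set.Icc (1 - q ^ 2) 1 :=
  ⟨by linarith [pow_le_pow_of_le_one hq hq1 he], by linarith [pow_nonneg hq e]⟩

lemma sq_mul_div_mul_mul_bounds {c A B C D : ℝ} (hc : 0 < c) (hA : A ∈ Set.Icc c 1)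
    (hB : B ∈ Set.Icc c 1) (hC : C ∈ Set.Icc c 1) (hD : D ∈ Set.Icc c 1) :
    c ^ 2 ≤ A ^ 2 * B / (c * C * D) ∧ A ^ 2 * B / (c * C * D) ≤ 1 / c ^ 3 := by
  obtain ⟨hA, hA1⟩ := hA
  obtain ⟨hB, hB1⟩ := hB
  obtain ⟨hC, hC1⟩ := hC
  obtain ⟨hD, hD1⟩ := hD
  have hA0 : 0 < A := hc.trans_le hA
  have hC0 : 0 < C := hc.trans_le hC
  have hD0 : 0 < D := hc.trans_le hD
  constructor
  · rw [le_div_iff₀ (by positivity)]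
    calc c ^ 2 * (c * C * D) ≤ c ^ 2 * (c * 1 * 1) := by gcongr
      _ = c ^ 2 * c := by ring
      _ ≤ A ^ 2 * B := by gcongr
  · rw [div_le_div_iff₀ (by positivity) (by positivity)]
    calc A ^ 2 * B * c ^ 3 ≤ 1 ^ 2 * 1 * c ^ 3 := by gcongr; linarith
      _ = c * c * c := by ring
      _ ≤ 1 * (c * C * D) := by rw [one_mul]; gcongr

/-- For `0 < q < 1` there exist constants `0 < D' ≤ D''` (depending only on `q`) such that
for all `n, k ∈ ℕ` and all `0 ≤ r ≤ 2·min{n,k}`, with `l = n + k - r`,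
`D' ≤ [r+1]_q²·[2l+1]_q/([2n+1]_q·[2k+1]_q) ≤ D''`. -/
theorem stmt7 (q : ℝ) (hq : 0 < q) (hq1 : q < 1) :
    ∃ D' D'' : ℝ, 0 < D' ∧ D' ≤ D'' ∧
      ∀ n k r : ℕ, r ≤ 2 * min n k →
        D' ≤ qnum q (r + 1) ^ 2 * qnum q (2 * (n + k - r) + 1) /
              (qnum q (2 * n + 1) * qnum q (2 * k + 1)) ∧
        qnum q (r + 1) ^ 2 * qnum q (2 * (n + k - r) + 1) /
              (qnum q (2 * n + 1) * qnum q (2 * k + 1)) ≤ D'' := by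
  have hq2 : q ^ 2 < 1 := pow_lt_one₀ hq.le hq1 two_ne_zero
  have hc : 0 < 1 - q ^ 2 := sub_pos.mpr hq2
  refine ⟨(1 - q ^ 2) ^ 2, 1 / (1 - q ^ 2) ^ 3, by positivity, ?_, fun n k r hr => ?_⟩
  · rw [le_div_iff₀ (by positivity), ← pow_add]
    exact pow_le_one₀ hc.le (by linarith [sq_nonneg q])
  have hmem : ∀ e, 2 ≤ e → 1 - q ^ e ∈ Set.Icc (1 - q ^ 2) 1 := fun e he =>
    one_sub_pow_mem_Icc hq.le hq1.le he
  rw [qnum_ratio_eq hq.ne' hq2.ne (show r + (n + k - r) = n + k by omega)]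
  exact sq_mul_div_mul_mul_bounds hc (hmem _ (by omega)) (hmem _ (by omega))
    (hmem _ (by omega)) (hmem _ (by omega))
end

section
/- Let 0 < q < 1 and for each l ∈ ℕ set m_l = [2l+1]_q. Then for all n, k ∈ ℕ with n + k = l, 1 ≤ m_n·m_k/m_l ≤ 1/(1-q²)². Consequently, defining α_l = (∑_{n+k=l} m_n m_k / m_l)^{-1/2}, one has (1-q²)·(l+1)^{-1/2} ≤ α_l ≤ (l+1)^{-1/2} for all l. -/
open Finset

theorem qnum_succ {q : ℝ} (hq : q ≠ 0) (hq2 : q ^ 2 ≠ 1) (a : ℕ) :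
    qnum q (a + 1) = (1 - q ^ 2 * (q ^ 2) ^ a) / (q ^ a * (1 - q ^ 2)) := by
  have hden : q - q⁻¹ ≠ 0 := by
    rw [sub_ne_zero]; intro h; apply hq2; field_simp at h; linear_combination h
  have h2 : (1 : ℝ) - q ^ 2 ≠ 0 := sub_ne_zero.2 (Ne.symm hq2)
  rw [qnum, div_eq_div_iff hden (by simp [hq, h2]), inv_pow]
  field_simp
  ring

theorem qnum_mul_qnum_div_qnum {q : ℝ} (hq : q ≠ 0) (hq2 : q ^ 2 ≠ 1) (n k : ℕ) :
    qnum q (2 * n + 1) * qnum q (2 * k + 1) / qnum q (2 * (n + k) + 1) =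
      (1 - q ^ 2 * (q ^ 4) ^ n) * (1 - q ^ 2 * (q ^ 4) ^ k) /
        ((1 - q ^ 2) * (1 - q ^ 2 * ((q ^ 4) ^ n * (q ^ 4) ^ k))) := by
  have h4 (m : ℕ) : (q ^ 2) ^ (2 * m) = (q ^ 4) ^ m := by rw [← pow_mul, ← pow_mul]; ring_nf
  simp only [qnum_succ hq hq2, h4, mul_add, pow_add]
  field_simp

theorem one_sub_mul_ratio_mem_Icc {c x y : ℝ} (hc : 0 ≤ c) (hc1 : c < 1)
    (hx : 0 ≤ x) (hx1 : x ≤ 1) (hy : 0 ≤ y) (hy1 : y ≤ 1) :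
    (1 - c * x) * (1 - c * y) / ((1 - c) * (1 - c * (x * y))) ∈
      Set.Icc 1 (1 / (1 - c) ^ 2) := by
  have hxy : c * (x * y) ≤ c := mul_le_of_le_one_right hc (mul_le_one₀ hx1 hy hy1)
  have hden : 0 < (1 - c) * (1 - c * (x * y)) := by nlinarith
  constructor
  · rw [le_div_iff₀ hden, one_mul]
    nlinarith [mul_nonneg (mul_nonneg hc (sub_nonneg.2 hx1)) (sub_nonneg.2 hy1)]
  · rw [div_le_div_iff₀ hden (by nlinarith)]
    have hnum : (1 - c * x) * (1 - c * y) ≤ 1 := by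
      nlinarith [mul_le_of_le_one_right hc hx1, mul_le_of_le_one_right hc hy1,
        mul_nonneg hc hx, mul_nonneg hc hy]
    nlinarith [mul_le_mul_of_nonneg_right hnum (sq_nonneg (1 - c))]

variable {ι : Type*} {s : Finset ι} {f : ι → ℝ}

theorem inv_sqrt_sum_le_inv_sqrt_card (h : ∀ i ∈ s, 1 ≤ f i) :
    (√(∑ i ∈ s, f i))⁻¹ ≤ (√(#s : ℝ))⁻¹ := by
  rcases s.eq_empty_or_nonempty with rfl | hs
  · simp
  refine inv_anti₀ (by simpa using hs) (Real.sqrt_le_sqrt ?_)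
  simpa using card_nsmul_le_sum s f 1 h

theorem div_sqrt_card_le_inv_sqrt_sum {c : ℝ} (hc : 0 < c) (hpos : ∀ i ∈ s, 0 < f i)
    (h : ∀ i ∈ s, f i ≤ 1 / c ^ 2) : c / √(#s : ℝ) ≤ (√(∑ i ∈ s, f i))⁻¹ := by
  rcases s.eq_empty_or_nonempty with rfl | hs
  · simp
  have hsum : ∑ i ∈ s, f i ≤ (√(#s : ℝ) / c) ^ 2 := by
    rw [div_pow, Real.sq_sqrt (Nat.cast_nonneg _), div_eq_mul_one_div]
    simpa using sum_le_card_nsmul s f _ h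
  rw [← inv_div]
  refine inv_anti₀ (Real.sqrt_pos.2 (sum_pos hpos hs)) ?_
  exact (Real.sqrt_le_sqrt hsum).trans_eq (Real.sqrt_sq (by positivity))

/-- Let `0 < q < 1` and set `m_l = [2l+1]_q`.  For all `n + k = l` one has
`1 ≤ m_n·m_k/m_l ≤ 1/(1-q²)²`; consequently, setting
`α_l = (∑_{n+k=l} m_n m_k/m_l)^{-1/2}`, one has
`(1-q²)(l+1)^{-1/2} ≤ α_l ≤ (l+1)^{-1/2}`. -/
theorem stmt8 (q : ℝ) (hq : 0 < q) (hq1 : q < 1) :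
    (∀ l n k : ℕ, n + k = l →
      1 ≤ qnum q (2 * n + 1) * qnum q (2 * k + 1) / qnum q (2 * l + 1) ∧
      qnum q (2 * n + 1) * qnum q (2 * k + 1) / qnum q (2 * l + 1) ≤
        1 / (1 - q ^ 2) ^ 2) ∧
    (∀ l : ℕ,
      (1 - q ^ 2) / Real.sqrt (l + 1) ≤
        (Real.sqrt (∑ n ∈ Finset.range (l + 1),
          qnum q (2 * n + 1) * qnum q (2 * (l - n) + 1) / qnum q (2 * l + 1)))⁻¹ ∧
      (Real.sqrt (∑ n ∈ Finset.range (l + 1),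
          qnum q (2 * n + 1) * qnum q (2 * (l - n) + 1) / qnum q (2 * l + 1)))⁻¹ ≤
        1 / Real.sqrt (l + 1)) := by
  have hq2 : q ^ 2 < 1 := pow_lt_one₀ hq.le hq1 two_ne_zero
  have hq4 : ∀ m : ℕ, 0 ≤ (q ^ 4) ^ m ∧ (q ^ 4) ^ m ≤ 1 := fun m =>
    ⟨by positivity, pow_le_one₀ (by positivity) (pow_le_one₀ hq.le hq1.le)⟩
  have hratio : ∀ l n k : ℕ, n + k = l →
      qnum q (2 * n + 1) * qnum q (2 * k + 1) / qnum q (2 * l + 1) ∈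
        Set.Icc 1 (1 / (1 - q ^ 2) ^ 2) := by
    rintro l n k rfl
    rw [qnum_mul_qnum_div_qnum hq.ne' hq2.ne]
    exact one_sub_mul_ratio_mem_Icc (by positivity) hq2 (hq4 n).1 (hq4 n).2 (hq4 k).1 (hq4 k).2
  refine ⟨hratio, fun l => ?_⟩
  have hterm : ∀ n ∈ range (l + 1),
      qnum q (2 * n + 1) * qnum q (2 * (l - n) + 1) / qnum q (2 * l + 1) ∈
        Set.Icc 1 (1 / (1 - q ^ 2) ^ 2) := fun n hn =>
    hratio l n (l - n) (by rw [mem_range] at hn; omega)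
  have hcard : ((#(range (l + 1)) : ℕ) : ℝ) = l + 1 := by simp
  rw [← hcard, one_div]
  exact ⟨div_sqrt_card_le_inv_sqrt_sum (sub_pos.2 hq2)
      (fun n hn => one_pos.trans_le (hterm n hn).1) (fun n hn => (hterm n hn).2),
    inv_sqrt_sum_le_inv_sqrt_card (fun n hn => (hterm n hn).1)⟩
end

section
/- Let 0 < q < 1. Then for every l ∈ ℕ, ∑_{(k,n): |n+k-l| ≤ 1} ([2k+1]_q[2n+1]_q/[2l+1]_q)·q^{2k+2l-2n-2} ≤ 3·q^{-6} / ((1-q²)²(1-q⁴)), where the sum runs over pairs (k,n) ∈ ℕ² with |n + k - l| ≤ 1 (and the term is interpreted via [2k+1]_q[2n+1]_q/[2l+1]_q ≤ q^{-2}/(1-q²)² for such pairs). -/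
open Finset

noncomputable def qint (p : ℝ) (a : ℕ) : ℝ := ∑ i ∈ range a, p ^ i

section QInt

variable {p : ℝ}

lemma one_le_qint_succ (hp : 0 ≤ p) (a : ℕ) : 1 ≤ qint p (a + 1) := by
  rw [qint, sum_range_succ', pow_zero, le_add_iff_nonneg_left]
  exact sum_nonneg fun i _ => pow_nonneg hp _

lemma qint_le_inv_one_sub (hp : 0 ≤ p) (hp1 : p < 1) (a : ℕ) : qint p a ≤ (1 - p)⁻¹ := by
  rw [qint, range_eq_Ico, inv_eq_one_div, ← pow_zero p]
  exact geom_sum_Ico_le_of_lt_one hp hp1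

end QInt

section QNum

variable {q : ℝ}

lemma qnum_succ_mul_pow (hq : q ≠ 0) (hq2 : q ^ 2 ≠ 1) (a : ℕ) :
    qnum q (a + 1) * q ^ a = qint (q ^ 2) (a + 1) := by
  have hdiff : q - q⁻¹ ≠ 0 := by
    rw [sub_ne_zero]; intro h; apply hq2; field_simp at h; linear_combination h
  rw [qint, geom_sum_eq hq2, qnum, div_mul_eq_mul_div, div_eq_div_iff hdiff (sub_ne_zero.2 hq2),
    inv_pow]
  field_simp
  ring

lemma qnum_succ_eq_qint_mul_zpow (hq : q ≠ 0) (hq2 : q ^ 2 ≠ 1) (a : ℕ) :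
    qnum q (a + 1) = qint (q ^ 2) (a + 1) * q ^ (-(a : ℤ)) := by
  rw [← qnum_succ_mul_pow hq hq2, zpow_neg, zpow_natCast,
    mul_inv_cancel_right₀ (pow_ne_zero _ hq)]

lemma qnum_odd_ratio_mul_zpow_eq (hq : q ≠ 0) (hq2 : q ^ 2 ≠ 1) (k n l : ℕ) :
    qnum q (2 * k + 1) * qnum q (2 * n + 1) / qnum q (2 * l + 1) *
        q ^ (2 * (k : ℤ) + 2 * (l : ℤ) - 2 * (n : ℤ) - 2) =
      qint (q ^ 2) (2 * k + 1) * qint (q ^ 2) (2 * n + 1) / qint (q ^ 2) (2 * l + 1) *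
        q ^ (4 * (l : ℤ) - 4 * (n : ℤ) - 2) := by
  rw [qnum_succ_eq_qint_mul_zpow hq hq2, qnum_succ_eq_qint_mul_zpow hq hq2,
    qnum_succ_eq_qint_mul_zpow hq hq2, mul_mul_mul_comm, mul_div_mul_comm, mul_assoc,
    ← zpow_add₀ hq, ← zpow_sub₀ hq, ← zpow_add₀ hq]
  congr 2
  push_cast
  ring

lemma qnum_odd_ratio_mul_zpow_le (hq : 0 < q) (hq1 : q < 1) {k n l : ℕ} (hkn : k + n ≤ l + 1) :
    qnum q (2 * k + 1) * qnum q (2 * n + 1) / qnum q (2 * l + 1) *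
        q ^ (2 * (k : ℤ) + 2 * (l : ℤ) - 2 * (n : ℤ) - 2) ≤
      q⁻¹ ^ 6 / (1 - q ^ 2) ^ 2 * (q ^ 4) ^ k := by
  have hq2_nonneg : 0 ≤ q ^ 2 := by positivity
  have hq21 : q ^ 2 < 1 := pow_lt_one₀ hq.le hq1 two_ne_zero
  have hqint (m : ℕ) : qint (q ^ 2) (2 * m + 1) ≤ (1 - q ^ 2)⁻¹ :=
    qint_le_inv_one_sub hq2_nonneg hq21 _
  have hratio : qint (q ^ 2) (2 * k + 1) * qint (q ^ 2) (2 * n + 1) / qint (q ^ 2) (2 * l + 1) ≤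
      ((1 - q ^ 2) ^ 2)⁻¹ := by
    have h1 (m : ℕ) : 1 ≤ qint (q ^ 2) (2 * m + 1) := one_le_qint_succ hq2_nonneg _
    calc _ ≤ qint (q ^ 2) (2 * k + 1) * qint (q ^ 2) (2 * n + 1) :=
          div_le_self (by nlinarith [h1 k, h1 n]) (h1 l)
      _ ≤ (1 - q ^ 2)⁻¹ * (1 - q ^ 2)⁻¹ :=
          mul_le_mul (hqint k) (hqint n) (zero_le_one.trans (h1 n))
            (zero_le_one.trans ((h1 k).trans (hqint k)))
      _ = ((1 - q ^ 2) ^ 2)⁻¹ := (sq _).symm.trans (inv_pow _ 2)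
  have hpow : q ^ (4 * (l : ℤ) - 4 * (n : ℤ) - 2) ≤ q⁻¹ ^ 6 * (q ^ 4) ^ k := calc
    _ ≤ q ^ (4 * (k : ℤ) - 6) := zpow_le_zpow_right_of_le_one₀ hq hq1.le (by omega)
    _ = q⁻¹ ^ 6 * (q ^ 4) ^ k := by
      rw [zpow_sub₀ hq.ne', inv_pow]
      norm_cast
      rw [pow_mul, div_eq_inv_mul]
  rw [qnum_odd_ratio_mul_zpow_eq hq.ne' hq21.ne]
  calc _ ≤ ((1 - q ^ 2) ^ 2)⁻¹ * (q⁻¹ ^ 6 * (q ^ 4) ^ k) :=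
        mul_le_mul hratio hpow (by positivity) (by positivity)
    _ = _ := by ring

end QNum

lemma card_filter_add_near_le_three (t : Finset ℕ) (k l : ℕ) :
    #{n ∈ t | k + n ≤ l + 1 ∧ l ≤ k + n + 1} ≤ 3 := by
  have hsub : {n ∈ t | k + n ≤ l + 1 ∧ l ≤ k + n + 1} ⊆ Icc (l - 1 - k) (l + 1 - k) := by
    intro n hn
    rw [mem_filter] at hn
    rw [mem_Icc]
    omega
  have := card_le_card hsub
  rw [Nat.card_Icc] at this
  omega

lemma sum_filter_add_near_le_three_mul (s t : Finset ℕ) (l : ℕ) {f : ℕ → ℝ}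
    (hf : ∀ k, 0 ≤ f k) :
    ∑ p ∈ (s ×ˢ t).filter (fun p => p.1 + p.2 ≤ l + 1 ∧ l ≤ p.1 + p.2 + 1), f p.1 ≤
      3 * ∑ k ∈ s, f k := by
  rw [sum_filter, sum_product, mul_sum]
  refine sum_le_sum fun k _ => ?_
  rw [← sum_filter]
  dsimp only
  rw [sum_const, nsmul_eq_mul]
  have hcard : (#{n ∈ t | k + n ≤ l + 1 ∧ l ≤ k + n + 1} : ℝ) ≤ 3 := by
    exact_mod_cast card_filter_add_near_le_three t k l
  exact mul_le_mul_of_nonneg_right hcard (hf k)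

/-- For `0 < q < 1` and every `l ∈ ℕ`,
`∑_{(k,n) : |n+k-l| ≤ 1} ([2k+1]_q[2n+1]_q/[2l+1]_q)·q^{2k+2l-2n-2}
  ≤ 3q⁻⁶/((1-q²)²(1-q⁴))`. -/
theorem stmt10 (q : ℝ) (hq : 0 < q) (hq1 : q < 1) :
    ∀ l : ℕ,
      ∑ p ∈ (Finset.range (l + 2) ×ˢ Finset.range (l + 2)).filter
          (fun p => p.1 + p.2 ≤ l + 1 ∧ l ≤ p.1 + p.2 + 1),
        qnum q (2 * p.1 + 1) * qnum q (2 * p.2 + 1) / qnum q (2 * l + 1) *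
          q ^ (2 * (p.1 : ℤ) + 2 * (l : ℤ) - 2 * (p.2 : ℤ) - 2) ≤
      3 * q⁻¹ ^ 6 / ((1 - q ^ 2) ^ 2 * (1 - q ^ 4)) := by
  intro l
  have hq4 : q ^ 4 < 1 := pow_lt_one₀ hq.le hq1 four_ne_zero
  have hc : 0 ≤ 3 * (q⁻¹ ^ 6 / (1 - q ^ 2) ^ 2) := by positivity
  refine (sum_le_sum fun p hp => qnum_odd_ratio_mul_zpow_le hq hq1 (mem_filter.1 hp).2.1).trans ?_
  refine (sum_filter_add_near_le_three_mul _ _ l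
    (f := fun k => q⁻¹ ^ 6 / (1 - q ^ 2) ^ 2 * (q ^ 4) ^ k) fun k => by positivity).trans ?_
  calc 3 * ∑ k ∈ range (l + 2), q⁻¹ ^ 6 / (1 - q ^ 2) ^ 2 * (q ^ 4) ^ k
      = 3 * (q⁻¹ ^ 6 / (1 - q ^ 2) ^ 2) * ∑ k ∈ range (l + 2), (q ^ 4) ^ k := by
        rw [← mul_sum, mul_assoc]
    _ ≤ 3 * (q⁻¹ ^ 6 / (1 - q ^ 2) ^ 2) * (1 - q ^ 4)⁻¹ :=
        mul_le_mul_of_nonneg_left (qint_le_inv_one_sub (by positivity) hq4 _) hc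
    _ = 3 * q⁻¹ ^ 6 / ((1 - q ^ 2) ^ 2 * (1 - q ^ 4)) := by
        rw [div_mul_eq_div_div, mul_div_assoc, div_eq_mul_inv _ (1 - q ^ 4)]
end
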